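/- Let λ₀^{AB} and λ₀^B denote the largest eigenvalues of ψ^{AB} and ψ^B respectively. If the majorization (𝟙_K/K) ⊗ ψ^B ≺ (𝟙_L/L) ⊗ ψ^{AB} holds, then log₂K − log₂L ≥ log₂(1/λ₀^{AB}) − log₂(1/λ₀^B). -/

import Mathlib

open Matrix Kronecker Finset
open scoped ComplexConjugate Classical ComplexOrder

noncomputable section

/-- Density matrix (outer product) of a vector. -/
def dmv {n : Type*} (v : n → ℂ) : Matrix n n ℂ :=
  Matrix.of fun i j => v i * conj (v j)

/-- Outer product `|u⟩⟨v|`. -/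
def outer {n : Type*} (u v : n → ℂ) : Matrix n n ℂ :=
  Matrix.of fun i j => u i * conj (v j)

/-- Largest eigenvalue of a (Hermitian) matrix. -/
def maxEig {n : Type*} [Fintype n] [DecidableEq n] (A : Matrix n n ℂ) : ℝ :=
  if h : A.IsHermitian then ⨆ i, h.eigenvalues i else 0

/-- Sum of the `k` largest eigenvalues of a Hermitian matrix. -/
def topSum {n : Type*} [Fintype n] [DecidableEq n] (A : Matrix n n ℂ) (k : ℕ) : ℝ :=
  if h : A.IsHermitian then
    sSup {x : ℝ | ∃ s : Finset n, s.card = k ∧ x = ∑ i ∈ s, h.eigenvalues i}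
  else 0

/-- Majorization of Hermitian operators: `A ≺ B` (possibly on different spaces):
every partial sum of the `k` largest eigenvalues of `A` is at most that of `B`,
and the traces agree. -/
def Maj {m n : Type*} [Fintype m] [DecidableEq m] [Fintype n] [DecidableEq n]
    (A : Matrix m m ℂ) (B : Matrix n n ℂ) : Prop :=
  (∀ k : ℕ, topSum A k ≤ topSum B k) ∧ A.trace = B.trace

/-- Total matrix square root: the positive square root for PSD matrices, `0` otherwise. -/
def msqrt {n : Type*} [Fintype n] [DecidableEq n] (A : Matrix n n ℂ) : Matrix n n ℂ :=
  if h : A.PosSemidef then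
    (h.1.eigenvectorUnitary : Matrix n n ℂ) *
      Matrix.diagonal (fun i => ((Real.sqrt (h.1.eigenvalues i) : ℝ) : ℂ)) *
      (star h.1.eigenvectorUnitary : Matrix n n ℂ)
  else 0

/-- Trace norm (sum of singular values). -/
def traceNorm {n : Type*} [Fintype n] [DecidableEq n] (A : Matrix n n ℂ) : ℝ :=
  ((msqrt (Aᴴ * A)).trace).re

/-- Fidelity `F(ρ,σ) = ‖√ρ √σ‖₁`. -/
def fid {n : Type*} [Fintype n] [DecidableEq n] (ρ σ : Matrix n n ℂ) : ℝ :=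
  traceNorm (msqrt ρ * msqrt σ)

/-- Purified distance `P(ρ,σ) = √(1 − F²(ρ,σ))`. -/
def pd {n : Type*} [Fintype n] [DecidableEq n] (ρ σ : Matrix n n ℂ) : ℝ :=
  Real.sqrt (1 - fid ρ σ ^ 2)

/-- Choi matrix of a map on matrices. -/
def choi {m n : Type*} [Fintype m] [DecidableEq m]
    (N : Matrix m m ℂ → Matrix n n ℂ) : Matrix (m × n) (m × n) ℂ :=
  Matrix.of fun p q => N (Matrix.single p.1 q.1 1) p.2 q.2

/-- A map is mixed-unitary if it is a convex combination of unitary conjugations. -/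
def IsMixedUnitary {n : Type*} [Fintype n] [DecidableEq n]
    (N : Matrix n n ℂ → Matrix n n ℂ) : Prop :=
  ∃ (m : ℕ) (p : Fin m → ℝ) (U : Fin m → Matrix n n ℂ),
    (∀ i, 0 ≤ p i) ∧ (∑ i, p i = 1) ∧ (∀ i, U i ∈ Matrix.unitaryGroup n ℂ) ∧
    ∀ ρ, N ρ = ∑ i, (p i : ℂ) • (U i * ρ * (U i)ᴴ)

/-- `id_R ⊗ M` acting blockwise on a matrix on `R × S`. -/
def idTensor {R S T : Type*} (M : Matrix S S ℂ →ₗ[ℂ] Matrix T T ℂ)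
    (ρ : Matrix (R × S) (R × S) ℂ) : Matrix (R × T) (R × T) ℂ :=
  Matrix.of fun p q => M (Matrix.of fun s s' => ρ (p.1, s) (q.1, s')) p.2 q.2

end

/-! At `k = 1` the majorization compares the largest eigenvalues of `(𝟙_K/K) ⊗ ψ^B` and
`(𝟙_L/L) ⊗ ψ^{AB}`, which are `λ₀^B/K` and `λ₀^{AB}/L`; taking logarithms of
`λ₀^B/K ≤ λ₀^{AB}/L` gives the claim. The largest eigenvalue of a
Kronecker product with `𝟙` is computed through the Loewner-order characterization
`λ₀(A) ≤ r ↔ A ≤ r • 𝟙`, since `𝟙 ⊗ A ≤ 𝟙 ⊗ B ↔ A ≤ B`. -/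

open scoped MatrixOrder

namespace Matrix

variable {α 𝕜 l m n p : Type*}

theorem IsHermitian.kronecker [CommSemiring α] [StarRing α] {A : Matrix m m α}
    {B : Matrix n n α} (hA : A.IsHermitian) (hB : B.IsHermitian) : (A ⊗ₖ B).IsHermitian := by
  rw [IsHermitian, conjTranspose_kronecker, hA, hB]

theorem kronecker_sub [NonUnitalNonAssocRing α] (A : Matrix l m α) (B C : Matrix n p α) :
    A ⊗ₖ (B - C) = A ⊗ₖ B - A ⊗ₖ C := by
  ext
  simp [mul_sub]

def partialTraceLeft [AddCommMonoid α] [Fintype m] (ψ : Matrix (m × n) (m × n) α) :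
    Matrix n n α :=
  of fun b b' => ∑ a, ψ (a, b) (a, b')

theorem IsHermitian.partialTraceLeft [AddCommMonoid α] [StarAddMonoid α] [Fintype m]
    {ψ : Matrix (m × n) (m × n) α} (hψ : ψ.IsHermitian) : ψ.partialTraceLeft.IsHermitian := by
  ext b b'
  simp only [Matrix.partialTraceLeft, conjTranspose_apply, of_apply, star_sum]
  exact Finset.sum_congr rfl fun a _ => hψ.apply _ _

theorem trace_partialTraceLeft [AddCommMonoid α] [Fintype m] [Fintype n]
    (ψ : Matrix (m × n) (m × n) α) : ψ.partialTraceLeft.trace = ψ.trace := by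
  simp only [trace, Matrix.diag, partialTraceLeft, of_apply, Fintype.sum_prod_type]
  exact Finset.sum_comm

variable [RCLike 𝕜] [Fintype m] [DecidableEq m] [Fintype n]

theorem one_kronecker_algebraMap [DecidableEq n] (r : ℝ) :
    (1 : Matrix m m 𝕜) ⊗ₖ algebraMap ℝ (Matrix n n 𝕜) r =
      algebraMap ℝ (Matrix (m × n) (m × n) 𝕜) r := by
  rw [Algebra.algebraMap_eq_smul_one, Algebra.algebraMap_eq_smul_one, kronecker_smul,
    one_kronecker_one]

theorem posSemidef_one_kronecker_iff [Nonempty m] {B : Matrix n n 𝕜} :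
    ((1 : Matrix m m 𝕜) ⊗ₖ B).PosSemidef ↔ B.PosSemidef := by
  refine ⟨fun h => ?_, PosSemidef.one.kronecker⟩
  convert h.submatrix (fun b => (Classical.arbitrary m, b))
  ext b b'
  simp

theorem one_kronecker_le_one_kronecker_iff [Nonempty m] {A B : Matrix n n 𝕜} :
    (1 : Matrix m m 𝕜) ⊗ₖ A ≤ 1 ⊗ₖ B ↔ A ≤ B := by
  rw [le_iff, le_iff, ← kronecker_sub, posSemidef_one_kronecker_iff]

end Matrix

section maxEig

variable {m n : Type*} [Fintype n] [DecidableEq n] {A : Matrix n n ℂ}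

theorem maxEig_eq_sSup_spectrum (hA : A.IsHermitian) : maxEig A = sSup (spectrum ℝ A) := by
  rw [maxEig, dif_pos hA, hA.spectrum_real_eq_range_eigenvalues, sSup_range]

theorem eigenvalues_le_maxEig (hA : A.IsHermitian) (i : n) : hA.eigenvalues i ≤ maxEig A := by
  rw [maxEig, dif_pos hA]
  exact le_ciSup (Set.finite_range _).bddAbove i

theorem maxEig_le_iff [Nonempty n] (hA : A.IsHermitian) {r : ℝ} :
    maxEig A ≤ r ↔ A ≤ algebraMap ℝ (Matrix n n ℂ) r := by
  rw [le_algebraMap_iff_spectrum_le hA.isSelfAdjoint, hA.spectrum_real_eq_range_eigenvalues,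
    Set.forall_mem_range, maxEig, dif_pos hA, ciSup_le_iff (Set.finite_range _).bddAbove]

theorem maxEig_pos (hA : A.IsHermitian) (htr : 0 < A.trace.re) : 0 < maxEig A := by
  by_contra! h
  rw [hA.trace_eq_sum_eigenvalues, Complex.re_sum] at htr
  exact htr.not_ge (Finset.sum_nonpos fun i _ => (eigenvalues_le_maxEig hA i).trans h)

theorem topSum_one (hA : A.IsHermitian) : topSum A 1 = maxEig A := by
  have hsingletons : {x : ℝ | ∃ s : Finset n, s.card = 1 ∧ x = ∑ i ∈ s, hA.eigenvalues i} =
      Set.range hA.eigenvalues := by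
    ext x
    simp [Finset.card_eq_one, eq_comm]
  rw [topSum, dif_pos hA, hsingletons, sSup_range, maxEig, dif_pos hA]

theorem maxEig_smul [Nonempty n] (hA : A.IsHermitian) {c : ℝ} (hc : 0 ≤ c) :
    maxEig (c • A) = c * maxEig A := by
  have hspec : (spectrum ℝ A).Nonempty := by
    rw [hA.spectrum_real_eq_range_eigenvalues]
    exact Set.range_nonempty _
  rw [maxEig_eq_sSup_spectrum (hA.smul (IsSelfAdjoint.all c)), maxEig_eq_sSup_spectrum hA,
    spectrum.smul_eq_smul _ _ hspec, Real.sSup_smul_of_nonneg hc, smul_eq_mul]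

theorem maxEig_one_kronecker [Fintype m] [DecidableEq m] [Nonempty m] [Nonempty n]
    (hA : A.IsHermitian) : maxEig ((1 : Matrix m m ℂ) ⊗ₖ A) = maxEig A := by
  refine eq_of_forall_ge_iff fun r => ?_
  rw [maxEig_le_iff (isHermitian_one.kronecker hA), maxEig_le_iff hA,
    ← one_kronecker_algebraMap, one_kronecker_le_one_kronecker_iff]

theorem topSum_one_smul_one_kronecker [Fintype m] [DecidableEq m] [Nonempty m] [Nonempty n]
    (hA : A.IsHermitian) {c : ℝ} (hc : 0 ≤ c) :
    topSum (((c : ℂ) • (1 : Matrix m m ℂ)) ⊗ₖ A) 1 = c * maxEig A := by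
  have h1A : ((1 : Matrix m m ℂ) ⊗ₖ A).IsHermitian := isHermitian_one.kronecker hA
  rw [smul_kronecker, Complex.coe_smul, topSum_one (h1A.smul (IsSelfAdjoint.all c)),
    maxEig_smul h1A hc, maxEig_one_kronecker hA]

end maxEig

/-- the majorization between resource-extended states implies the
entanglement-cost bound in terms of the largest eigenvalues of `ψ^{AB}` and `ψ^B`. -/
theorem stmt12 {At Bt : Type*} [Fintype At] [DecidableEq At] [Fintype Bt] [DecidableEq Bt]
    [Nonempty At] [Nonempty Bt]
    (ψAB : Matrix (At × Bt) (At × Bt) ℂ) (hψ : ψAB.PosSemidef) (hψ1 : ψAB.trace = 1)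
    (K L : ℕ) (hK : 0 < K) (hL : 0 < L)
    (hmaj : Maj
      (((K : ℂ)⁻¹ • (1 : Matrix (Fin K) (Fin K) ℂ)) ⊗ₖ
        (Matrix.of fun b b' : Bt => ∑ a, ψAB (a, b) (a, b')))
      (((L : ℂ)⁻¹ • (1 : Matrix (Fin L) (Fin L) ℂ)) ⊗ₖ ψAB)) :
    Real.logb 2 K - Real.logb 2 L ≥
      Real.logb 2 (maxEig ψAB)⁻¹ -
        Real.logb 2 (maxEig (Matrix.of fun b b' : Bt => ∑ a, ψAB (a, b) (a, b')))⁻¹ := by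
  change Maj (((K : ℂ)⁻¹ • 1 : Matrix (Fin K) (Fin K) ℂ) ⊗ₖ ψAB.partialTraceLeft) _ at hmaj
  change _ ≥ _ - Real.logb 2 (maxEig ψAB.partialTraceLeft)⁻¹
  have : Nonempty (Fin K) := ⟨⟨0, hK⟩⟩
  have : Nonempty (Fin L) := ⟨⟨0, hL⟩⟩
  have hAB : ψAB.IsHermitian := hψ.isHermitian
  have hB : ψAB.partialTraceLeft.IsHermitian := hAB.partialTraceLeft
  have hABpos : 0 < maxEig ψAB := maxEig_pos hAB (by simp [hψ1])
  have hBpos : 0 < maxEig ψAB.partialTraceLeft :=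
    maxEig_pos hB (by simp [trace_partialTraceLeft, hψ1])
  have hK' : (0 : ℝ) < K := Nat.cast_pos.mpr hK
  have hL' : (0 : ℝ) < L := Nat.cast_pos.mpr hL
  have hmaxEig : (K : ℝ)⁻¹ * maxEig ψAB.partialTraceLeft ≤ (L : ℝ)⁻¹ * maxEig ψAB := by
    have h := hmaj.1 1
    rwa [← Complex.ofReal_natCast, ← Complex.ofReal_natCast, ← Complex.ofReal_inv,
      ← Complex.ofReal_inv, topSum_one_smul_one_kronecker hB (by positivity),
      topSum_one_smul_one_kronecker hAB (by positivity)] at h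
  have hmul : (L : ℝ) * maxEig ψAB.partialTraceLeft ≤ K * maxEig ψAB := by
    rw [inv_mul_eq_div, inv_mul_eq_div, div_le_div_iff₀ hK' hL'] at hmaxEig
    linarith
  have hlog := Real.logb_le_logb_of_le one_lt_two (by positivity) hmul
  rw [Real.logb_mul hL'.ne' hBpos.ne', Real.logb_mul hK'.ne' hABpos.ne'] at hlog
  rw [ge_iff_le, Real.logb_inv, Real.logb_inv]
  linarith
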